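/- arXiv:0804.0935 — 3 statements merged into one kernel-verified Lean document; each statement's English description precedes it below -/
import Mathlib

section
/- Let p be prime, S ⊆ ℤ/pℤ with 0 ∈ S, |S| ≥ 3, S is 2-separable, and κ₂(S) ≤ |S| + m for an integer m. Then any 2-atom A of S satisfies |A| ≤ m + 3. -/
open Finset Pointwise

/-- The arithmetic progression `{a, a+d, ..., a+(L-1)d}` in `ZMod p`. -/
def apSet {p : ℕ} (a d : ZMod p) (L : ℕ) : Finset (ZMod p) :=
  (Finset.range L).image (fun i : ℕ => a + (i : ZMod p) * d)

/-- `X` is contained in an arithmetic progression of length `L` (difference nonzero). -/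
def ContainedInAP {p : ℕ} (X : Finset (ZMod p)) (L : ℕ) : Prop :=
  ∃ a d : ZMod p, d ≠ 0 ∧ X ⊆ apSet a d L

/-- `S` is `k`-separable. -/
def Separable (p k : ℕ) (S : Finset (ZMod p)) : Prop :=
  ∃ X : Finset (ZMod p), k ≤ X.card ∧ (X + S).card ≤ p - k

/-- The `k`-th isoperimetric number `κ_k(S)`. -/
noncomputable def kappa (p k : ℕ) (S : Finset (ZMod p)) : ℤ :=
  sInf {n : ℤ | ∃ X : Finset (ZMod p),
    k ≤ X.card ∧ (X + S).card ≤ p - k ∧ n = ((X + S).card : ℤ) - X.card}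

/-- `X` is a `k`-fragment of `S`. -/
noncomputable def IsFragment (p k : ℕ) (S X : Finset (ZMod p)) : Prop :=
  k ≤ X.card ∧ (X + S).card ≤ p - k ∧ ((X + S).card : ℤ) - X.card = kappa p k S

/-- `X` is a `k`-atom of `S`: a `k`-fragment of minimal cardinality. -/
noncomputable def IsKAtom (p k : ℕ) (S X : Finset (ZMod p)) : Prop :=
  IsFragment p k S X ∧ ∀ Y : Finset (ZMod p), IsFragment p k S Y → X.card ≤ Y.card

/-! Cauchy–Davenport gives `κ₂(S) ≥ |S| - 1`, so if `|A| ≥ m + 4` then `|A| ≥ 3` and, using `S` as a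
test set, `κ₂(A) ≤ |S + A| - |S| ≤ 2|A| - 4`. Submodularity of `X ↦ |X + S|` together with the
minimality of the atom `A` shows that `|A ∩ (A + c)| ≤ 1` for `c ≠ 0`, i.e. `A` is a Sidon set, and
likewise for a 2-atom `B` of `A`. By Cauchy–Schwarz `|A|²|B|² ≤ |A + B| · E(A, B)`, while the
Sidon property of the larger of `A`, `B` bounds the additive energy `E(A, B)`; this is incompatible
with `|A + B| ≤ |B| + 2|A| - 4`. -/

open scoped Combinatorics.Additive

section Sidon

variable {G : Type*} [AddCommGroup G] [DecidableEq G]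

/-- In a group this says that the nonzero differences of elements of `t` are pairwise distinct,
i.e. `t` is a Sidon set. -/
def IsAddSidon (t : Finset G) : Prop :=
  ∀ c : G, c ≠ 0 → #(t ∩ (t + {c})) ≤ 1

lemma IsAddSidon.addEnergy_add_card_le {s t : Finset G} (ht : IsAddSidon t) :
    E[s, t] + #s ≤ #s * (#s + #t) := by
  -- A quadruple with `a₁ = a₂` is determined by `(a₁, b₁)`, one with `a₁ ≠ a₂` by `(a₁, a₂)`,
  -- since then `b₁` is the unique element of `t ∩ (t + {a₂ - a₁})`.
  set F := {x ∈ (s ×ˢ s) ×ˢ t ×ˢ t | x.1.1 + x.2.1 = x.1.2 + x.2.2}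
  have hdiag : #{x ∈ F | x.1.1 = x.1.2} ≤ #s * #t := by
    rw [← card_product]
    refine card_le_card_of_injOn (fun x => (x.1.1, x.2.1)) (fun x hx => ?_)
      fun ⟨⟨a₁, a₂⟩, b₁, b₂⟩ hx ⟨⟨a₁', a₂'⟩, b₁', b₂'⟩ hy hxy => ?_
    · simp only [F, mem_coe, mem_filter, mem_product] at hx
      exact mem_product.2 ⟨hx.1.1.1.1, hx.1.1.2.1⟩
    · simp only [F, mem_coe, mem_filter, mem_product, Prod.mk.injEq] at hx hy hxy ⊢
      obtain ⟨rfl, rfl⟩ := hxy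
      obtain ⟨⟨-, h⟩, rfl⟩ := hx
      obtain ⟨⟨-, h'⟩, rfl⟩ := hy
      exact ⟨⟨rfl, rfl⟩, rfl, add_left_cancel (h.symm.trans h')⟩
  have hoff : #{x ∈ F | ¬x.1.1 = x.1.2} ≤ #s.offDiag := by
    refine card_le_card_of_injOn Prod.fst (fun x hx => ?_)
      fun ⟨⟨a₁, a₂⟩, b₁, b₂⟩ hx ⟨⟨a₁', a₂'⟩, b₁', b₂'⟩ hy hxy => ?_
    · simp only [F, mem_coe, mem_filter, mem_product] at hx
      exact mem_offDiag.2 ⟨hx.1.1.1.1, hx.1.1.1.2, hx.2⟩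
    · simp only [F, mem_coe, mem_filter, mem_product, Prod.mk.injEq] at hx hy hxy ⊢
      obtain ⟨rfl, rfl⟩ := hxy
      obtain ⟨⟨⟨⟨-, -⟩, hb₁, hb₂⟩, h⟩, hne⟩ := hx
      obtain ⟨⟨⟨⟨-, -⟩, hb₁', hb₂'⟩, h'⟩, -⟩ := hy
      have hmem : ∀ u v, u ∈ t → v ∈ t → a₁ + u = a₂ + v → u ∈ t ∩ (t + {a₂ - a₁}) :=
        fun u v hu hv huv => mem_inter.2 ⟨hu, by
          rw [show u = v + (a₂ - a₁) by rw [← add_sub_assoc, add_comm v, ← huv]; abel]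
          exact add_mem_add hv (mem_singleton_self _)⟩
      have hb : b₁ = b₁' := card_le_one.1 (ht _ (sub_ne_zero.2 (Ne.symm hne))) _
        (hmem _ _ hb₁ hb₂ h) _ (hmem _ _ hb₁' hb₂' h')
      subst hb
      exact ⟨⟨rfl, rfl⟩, rfl, add_left_cancel (h.symm.trans h')⟩
  have hsplit := card_filter_add_card_filter_not (s := F) (p := fun x => x.1.1 = x.1.2)
  rw [offDiag_card] at hoff
  have : #s ≤ #s * #s := Nat.le_mul_self _
  change #F + #s ≤ _
  rw [mul_add]
  omega

lemma IsAddSidon.lt_card_add {s t : Finset G} (ht : IsAddSidon t) (hs : 2 ≤ #s) (hst : #s ≤ #t)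
    (ht3 : 3 ≤ #t) : #s + 2 * #t - 4 < #(s + t) := by
  by_contra! hN
  have hCS := le_card_add_mul_addEnergy s t
  have hE := ht.addEnergy_add_card_le (s := s)
  have hN' : #(s + t) * E[s, t] ≤ (#s + 2 * #t - 4) * E[s, t] := Nat.mul_le_mul_right _ hN
  zify [show 4 ≤ #s + 2 * #t by omega] at hCS hE hN' hs hst ht3
  set x : ℤ := (#s : ℤ)
  set y : ℤ := (#t : ℤ)
  have key : x * y ^ 2 ≤ (x + 2 * y - 4) * (x + y - 1) := by
    nlinarith
  -- `x y² - (x + 2y - 4)(x + y - 1) = (x - 2)((y - 1)(y - 3) + (y - x)) + 2`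
  nlinarith [mul_nonneg (mul_nonneg (sub_nonneg.2 hs) (sub_nonneg.2 (by linarith : 1 ≤ y)))
    (sub_nonneg.2 ht3), mul_nonneg (sub_nonneg.2 hs) (sub_nonneg.2 hst)]

end Sidon

lemma card_union_add_add_card_inter_add_le {G : Type*} [DecidableEq G] [Add G]
    (X Y T : Finset G) : #((X ∪ Y) + T) + #((X ∩ Y) + T) ≤ #(X + T) + #(Y + T) := by
  rw [union_add, ← card_union_add_card_inter (X + T) (Y + T)]
  exact Nat.add_le_add_left (card_le_card (inter_add_subset : X ∩ Y + T ⊆ _)) _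

lemma ZMod.card_inter_add_singleton_lt {p : ℕ} (hp : p.Prime) {A : Finset (ZMod p)}
    (hA : A.Nonempty) (hAp : #A < p) {c : ZMod p} (hc : c ≠ 0) : #(A ∩ (A + {c})) < #A := by
  -- Cauchy–Davenport for `A + {0, c} = A ∪ (A + {c})`
  have hCD := ZMod.cauchy_davenport hp hA (insert_nonempty 0 {c})
  rw [card_pair hc.symm, insert_eq, add_union, singleton_zero, add_zero] at hCD
  have := card_union_add_card_inter A (A + {c})
  rw [card_add_singleton] at this
  omega

section Kappa

variable {p k : ℕ} {S X A : Finset (ZMod p)}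

lemma bddBelow_kappa_set (hS : S.Nonempty) : BddBelow {n : ℤ | ∃ X : Finset (ZMod p),
    k ≤ #X ∧ #(X + S) ≤ p - k ∧ n = (#(X + S) : ℤ) - #X} :=
  ⟨0, by rintro _ ⟨X, -, -, rfl⟩; simpa using card_le_card_add_right hS⟩

lemma kappa_le (hS : S.Nonempty) (hX : k ≤ #X) (hXS : #(X + S) ≤ p - k) :
    kappa p k S ≤ #(X + S) - #X :=
  csInf_le (bddBelow_kappa_set hS) ⟨X, hX, hXS, rfl⟩

lemma card_sub_one_le_kappa (hp : p.Prime) (hk : k ≠ 0) (hS : S.Nonempty)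
    (hsep : Separable p k S) : (#S : ℤ) - 1 ≤ kappa p k S := by
  obtain ⟨X, hX, hXS⟩ := hsep
  refine le_csInf ⟨_, X, hX, hXS, rfl⟩ ?_
  rintro _ ⟨Y, hY, hYS, rfl⟩
  have hY0 : Y.Nonempty := card_pos.1 (by omega)
  have := ZMod.cauchy_davenport hp hY0 hS
  have := hp.pos
  omega

lemma exists_isFragment (hS : S.Nonempty) (hsep : Separable p k S) :
    ∃ X, IsFragment p k S X := by
  obtain ⟨X, hX, hXS⟩ := hsep
  obtain ⟨Y, hY, hYS, hYκ⟩ :=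
    Int.csInf_mem (by exact ⟨_, X, hX, hXS, rfl⟩) (bddBelow_kappa_set hS)
  exact ⟨Y, hY, hYS, hYκ.symm⟩

lemma exists_isKAtom (hS : S.Nonempty) (hsep : Separable p k S) : ∃ A, IsKAtom p k S A := by
  classical
  obtain ⟨X, hX⟩ := exists_isFragment hS hsep
  have hex : ∃ n, ∃ X, IsFragment p k S X ∧ #X = n := ⟨_, X, hX, rfl⟩
  obtain ⟨A, hA, hAn⟩ := Nat.find_spec hex
  exact ⟨A, hA, fun Y hY => hAn ▸ Nat.find_min' hex ⟨Y, hY, rfl⟩⟩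

lemma IsKAtom.lt_card_add_of_ssubset (hA : IsKAtom p k S A) (hS : S.Nonempty) (hXA : X ⊂ A)
    (hX : k ≤ #X) : #X + kappa p k S < #(X + S) := by
  have hXS : #(X + S) ≤ p - k := (card_le_card (add_subset_add_right hXA.subset)).trans hA.1.2.1
  by_contra! h
  have hfrag : IsFragment p k S X := ⟨hX, hXS, le_antisymm (by linarith) (kappa_le hS hX hXS)⟩
  exact (card_lt_card hXA).not_ge (hA.2 X hfrag)

lemma IsKAtom.two_mul_card_add_kappa_le [NeZero p] (hA : IsKAtom p k S A) (hS : S.Nonempty) :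
    2 * (#A : ℤ) + kappa p k S ≤ p := by
  -- `C = -(A + S)ᶜ` is again a `k`-fragment, of size `p - |A| - κ`.
  obtain ⟨⟨hkA, hAS, hκ⟩, hmin⟩ := hA
  set C := -(A + S)ᶜ
  have hCS : C + S ⊆ (-A)ᶜ := by
    intro y hy
    obtain ⟨c, hc, s, hs, rfl⟩ := mem_add.1 hy
    simp only [C, mem_compl, mem_neg'] at hc ⊢
    exact fun h => hc (by simpa using add_mem_add h hs)
  have hC : #C = p - #(A + S) := by rw [card_neg, card_compl, ZMod.card]
  have hCS' : #(C + S) ≤ p - #A := by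
    simpa only [card_compl, card_neg, ZMod.card] using card_le_card hCS
  have hAp : #A ≤ p := (card_le_univ A).trans_eq (ZMod.card p)
  have hAAS : #A ≤ #(A + S) := card_le_card_add_right hS
  have hCk : k ≤ #C := by omega
  have hCfrag : IsFragment p k S C :=
    ⟨hCk, by omega, le_antisymm (by push_cast [hC]; omega) (kappa_le hS hCk (by omega))⟩
  have := hmin C hCfrag
  omega

lemma IsKAtom.card_inter_add_singleton_lt (hp : p.Prime) (hk : k ≠ 0) (hA : IsKAtom p k S A)
    (hS : S.Nonempty) {c : ZMod p} (hc : c ≠ 0) : #(A ∩ (A + {c})) < k := by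
  -- Submodularity for `A` and `Y = A + {c}`: the proper subset `A ∩ Y` of the atom grows by more
  -- than `κ`, so `A ∪ Y` grows by less than `κ` or is too large to be admissible.
  have : NeZero p := ⟨hp.ne_zero⟩
  obtain ⟨⟨hkA, hAS, hκ⟩, -⟩ := id hA
  set Y := A + {c}
  by_contra! hZ
  have hAp : #A < p := by have := card_le_card_add_right (s := A) hS; have := hp.pos; omega
  have hZA : A ∩ Y ⊂ A := inter_subset_left.ssubset_of_ne fun h =>
    (ZMod.card_inter_add_singleton_lt hp (card_pos.1 (by omega)) hAp hc).ne (by rw [h])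
  have hZS := hA.lt_card_add_of_ssubset hS hZA hZ
  have hsub := card_union_add_add_card_inter_add_le A Y S
  rw [show Y + S = A + S + {c} from add_right_comm _ _ _, card_add_singleton] at hsub
  have hunion := card_union_add_card_inter A Y
  rw [card_add_singleton] at hunion
  have hWk : k ≤ #(A ∪ Y) := hkA.trans (card_le_card subset_union_left)
  rcases le_or_gt #((A ∪ Y) + S) (p - k) with hW | hW
  · have := kappa_le hS hWk hW
    omega
  · have := hA.two_mul_card_add_kappa_le hS
    omega

lemma IsKAtom.isAddSidon (hp : p.Prime) (hA : IsKAtom p 2 S A) (hS : S.Nonempty) :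
    IsAddSidon A := fun _ hc =>
  Nat.lt_succ_iff.1 (hA.card_inter_add_singleton_lt hp two_ne_zero hS hc)

end Kappa

theorem two_atom_card_le_general (p : ℕ) (hp : p.Prime) (S : Finset (ZMod p))
    (hS3 : 3 ≤ S.card) (hsep : Separable p 2 S) (m : ℤ)
    (hkappa : kappa p 2 S ≤ (S.card : ℤ) + m)
    (A : Finset (ZMod p)) (hA : IsKAtom p 2 S A) :
    (A.card : ℤ) ≤ m + 3 := by
  have hS : S.Nonempty := card_pos.1 (by omega)
  have hκS := card_sub_one_le_kappa hp two_ne_zero hS hsep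
  by_contra! hAm
  have hA3 : 3 ≤ #A := by omega
  have hAne : A.Nonempty := card_pos.1 (by omega)
  have hSA : #(S + A) ≤ p - 2 := add_comm A S ▸ hA.1.2.1
  have hκA := kappa_le hAne (by omega : 2 ≤ #S) hSA
  obtain ⟨B, hB⟩ := exists_isKAtom hAne ⟨S, by omega, hSA⟩
  -- `κ₂(A) ≤ |S + A| - |S| = κ₂(S) + |A| - |S| ≤ 2|A| - 4`
  have hBA : #(B + A) ≤ #B + 2 * #A - 4 := by
    have := hA.1.2.2
    have := hB.1.2.2
    rw [add_comm S A] at hκA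
    omega
  rcases le_or_gt #B #A with hBA' | hAB
  · have := (hA.isAddSidon hp hS).lt_card_add hB.1.1 hBA' hA3
    omega
  · have := (hB.isAddSidon hp hAne).lt_card_add (by omega) hAB.le (by omega)
    rw [add_comm A B] at this
    omega

theorem two_atom_card_le (p : ℕ) (hp : p.Prime) (S : Finset (ZMod p)) (h0 : (0 : ZMod p) ∈ S)
    (hS3 : 3 ≤ S.card) (hsep : Separable p 2 S) (m : ℤ)
    (hkappa : kappa p 2 S ≤ (S.card : ℤ) + m)
    (A : Finset (ZMod p)) (hA : IsKAtom p 2 S A) :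
    (A.card : ℤ) ≤ m + 3 :=
  two_atom_card_le_general p hp S hS3 hsep m hkappa A hA
end

section
/- Let p be prime, and let S ⊆ ℤ/pℤ with 0 ∈ S satisfy |2S| ≤ 2|S| + m where 6 ≤ m ≤ ε|S| with ε ≤ 10⁻⁴, and suppose |2S| + m + 3 ≤ p. Let A be an (m+3)-atom of S with 0 ∈ A (so |S+A| ≤ |S| + |A| + m and |A| ≤ 3m+5). Then for any positive integer k ≤ 32, |kA| ≤ k(|A| + m)(1 + 5kε/2) + 1. -/
/-!
Write `t = (|A| + m) / |S|`, so that `|S + A| ≤ (1 + t)|S|` and `t ≤ 29ε/6`.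
By Petridis' form of the Plünnecke–Ruzsa inequality there is a nonempty `C ⊆ S` with
`|C + kA| ≤ (1 + t)^k |C|`, and for `k ≤ 32` this is less than `2|C| ≤ p` (Cauchy–Davenport
applied to `S + S` gives `2|S| ≤ p`). Cauchy–Davenport applied to `C + kA` then yields
`|kA| ≤ ((1 + t)^k - 1)|C| + 1 ≤ ((1 + t)^k - 1)|S| + 1`, and the quadratic estimate
`(1 + t)^k ≤ 1 + kt + k(k-1)/2 · t²(1 + t)^k` turns this into the claimed bound.
-/

open Finset Pointwise

/-- `ℓ(X)`: the length of a shortest arithmetic progression containing `X`. -/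
noncomputable def APlen {p : ℕ} (X : Finset (ZMod p)) : ℕ :=
  sInf {L : ℕ | ContainedInAP X L}

/-- `iterSum A k = A + A + ⋯ + A` (`k` times), with `iterSum A 0 = {0}`. -/
def iterSum {p : ℕ} (A : Finset (ZMod p)) : ℕ → Finset (ZMod p)
  | 0 => {0}
  | (n + 1) => iterSum A n + A

namespace Finset

variable {G : Type*} [AddCommGroup G] [DecidableEq G]

theorem exists_subset_card_add_mul_le {S : Finset G} (hS : S.Nonempty) (A : Finset G) :
    ∃ C ⊆ S, C.Nonempty ∧ #(C + A) * #S ≤ #(S + A) * #C ∧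
      ∀ C' ⊆ C, #(C + A) * #C' ≤ #(C' + A) * #C := by
  have hS' : S ∈ S.powerset.erase ∅ := mem_erase_of_ne_of_mem hS.ne_empty (mem_powerset_self _)
  obtain ⟨C, hC, hCmin⟩ :=
    exists_min_image (S.powerset.erase ∅) (fun C ↦ (#(C + A) / #C : ℚ≥0)) ⟨S, hS'⟩
  rw [mem_erase, mem_powerset, ← nonempty_iff_ne_empty] at hC
  obtain ⟨hC, hCS⟩ := hC
  have hmin : ∀ C' ⊆ S, C'.Nonempty → #(C + A) * #C' ≤ #(C' + A) * #C := by
    intro C' hC'S hC'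
    have h := hCmin C' (mem_erase_of_ne_of_mem hC'.ne_empty (mem_powerset.2 hC'S))
    rw [div_le_div_iff₀ (by simpa using hC.card_pos) (by simpa using hC'.card_pos)] at h
    exact_mod_cast h
  refine ⟨C, hCS, hC, hmin S subset_rfl hS, fun C' hC' ↦ ?_⟩
  obtain rfl | hC'ne := C'.eq_empty_or_nonempty
  · simp
  · exact hmin C' (hC'.trans hCS) hC'ne

theorem card_add_nsmul_mul_pow_le {C A : Finset G}
    (hC : ∀ C' ⊆ C, #(C + A) * #C' ≤ #(C' + A) * #C) (n : ℕ) :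
    #(C + n • A) * #C ^ n ≤ #(C + A) ^ n * #C := by
  induction n with
  | zero => simp
  | succ n ih =>
    have hpet := pluennecke_petridis_inequality_add (n • A) hC
    rw [add_comm (n • A) C] at hpet
    calc #(C + (n + 1) • A) * #C ^ (n + 1) = #(C + n • A + A) * #C * #C ^ n := by
          rw [succ_nsmul, ← add_assoc, pow_succ]; ring
      _ ≤ #(C + A) * #(C + n • A) * #C ^ n := Nat.mul_le_mul_right _ hpet
      _ ≤ #(C + A) ^ (n + 1) * #C := by
          rw [mul_assoc, pow_succ', mul_assoc]; gcongr

theorem exists_subset_card_add_nsmul_le_pow_mul {S : Finset G} (hS : S.Nonempty)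
    {A : Finset G} {r : ℝ} (hr : (#(S + A) : ℝ) ≤ r * #S) :
    ∃ C ⊆ S, C.Nonempty ∧ ∀ n : ℕ, (#(C + n • A) : ℝ) ≤ r ^ n * #C := by
  obtain ⟨C, hCS, hC, hratio, hpet⟩ := exists_subset_card_add_mul_le hS A
  have hS0 : (0 : ℝ) < #S := by exact_mod_cast hS.card_pos
  have hC0 : (0 : ℝ) < #C := by exact_mod_cast hC.card_pos
  have hCA : (#(C + A) : ℝ) ≤ r * #C := by
    have : (#(C + A) * #S : ℝ) ≤ #(S + A) * #C := by exact_mod_cast hratio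
    nlinarith
  refine ⟨C, hCS, hC, fun n ↦ le_of_mul_le_mul_right ?_ (pow_pos hC0 n)⟩
  calc (#(C + n • A) * #C ^ n : ℝ) ≤ #(C + A) ^ n * #C := by
        exact_mod_cast card_add_nsmul_mul_pow_le hpet n
    _ ≤ (r * #C) ^ n * #C := by gcongr
    _ = r ^ n * #C * #C ^ n := by ring

end Finset

theorem one_add_pow_le_one_add_mul_add {t : ℝ} (ht : 0 ≤ t) (k : ℕ) :
    (1 + t) ^ k ≤ 1 + k * t + k * (k - 1) / 2 * t ^ 2 * (1 + t) ^ k := by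
  induction k with
  | zero => simp
  | succ k ih =>
    have hk : (0 : ℝ) ≤ k := k.cast_nonneg
    have hpow : (1 + t) ^ k ≤ (1 + t) ^ (k + 1) := pow_le_pow_right₀ (by linarith) k.le_succ
    have hone : 1 ≤ (1 + t) ^ k := one_le_pow₀ (by linarith)
    push_cast
    calc (1 + t) ^ (k + 1) = (1 + t) ^ k * (1 + t) := pow_succ _ _
      _ ≤ (1 + k * t + k * (k - 1) / 2 * t ^ 2 * (1 + t) ^ k) * (1 + t) := by gcongr
      _ = 1 + (k + 1) * t + k * t ^ 2 + k * (k - 1) / 2 * t ^ 2 * (1 + t) ^ (k + 1) := by ring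
      _ ≤ 1 + (k + 1) * t + (k + 1) * (k + 1 - 1) / 2 * t ^ 2 * (1 + t) ^ (k + 1) := by
        nlinarith [mul_le_mul_of_nonneg_left (hone.trans hpow) (by positivity : 0 ≤ k * t ^ 2)]

theorem one_add_pow_sub_one_le {t δ : ℝ} (ht : 0 ≤ t) {k : ℕ} (hδ : t * (1 + t) ^ k ≤ δ) :
    (1 + t) ^ k - 1 ≤ k * t * (1 + k * δ / 2) := by
  have hk : (0 : ℝ) ≤ k := k.cast_nonneg
  have hquad := one_add_pow_le_one_add_mul_add ht k
  have : k * (k - 1) / 2 * t ^ 2 * (1 + t) ^ k ≤ k * k / 2 * t * δ := by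
    calc k * (k - 1) / 2 * t ^ 2 * (1 + t) ^ k = k * (k - 1) / 2 * t * (t * (1 + t) ^ k) := by ring
      _ ≤ k * k / 2 * t * (t * (1 + t) ^ k) := by gcongr; linarith
      _ ≤ k * k / 2 * t * δ := by gcongr
  nlinarith

theorem one_add_pow_le_of_le_mul {t ε : ℝ} (ht : 0 ≤ t) (htε : t ≤ 29 / 6 * ε)
    (hε : ε ≤ 10 ^ (-(4 : ℤ))) {k : ℕ} (hk : k ≤ 32) : (1 + t) ^ k ≤ 30 / 29 := by
  norm_num at hε
  calc (1 + t) ^ k ≤ (1 + t) ^ 32 := pow_le_pow_right₀ (by linarith) hk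
    _ ≤ (1 + 29 / 60000) ^ 32 := by gcongr; linarith
    _ ≤ 30 / 29 := by norm_num

namespace ZMod

variable {p : ℕ}

theorem card_add_card_le_card_add_add_one (hp : p.Prime) {s t : Finset (ZMod p)}
    (hs : s.Nonempty) (ht : t.Nonempty) (hst : #(s + t) < p) : #s + #t ≤ #(s + t) + 1 := by
  have := cauchy_davenport hp hs ht
  have := hs.card_pos
  omega

theorem card_le_of_card_add_le_mul (hp : p.Prime) {s t : Finset (ZMod p)}
    (hs : s.Nonempty) (ht : t.Nonempty) (hsp : 2 * #s ≤ p) {r : ℝ} (hr : r < 2)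
    (hst : (#(s + t) : ℝ) ≤ r * #s) : (#t : ℝ) ≤ (r - 1) * #s + 1 := by
  have hs0 : (0 : ℝ) < #s := by exact_mod_cast hs.card_pos
  have hsp' : (2 * #s : ℝ) ≤ p := by exact_mod_cast hsp
  have hlt : #(s + t) < p := by exact_mod_cast (show (#(s + t) : ℝ) < p by nlinarith)
  have := card_add_card_le_card_add_add_one hp hs ht hlt
  have : (#s + #t : ℝ) ≤ #(s + t) + 1 := by exact_mod_cast this
  linarith

theorem card_nsmul_le_of_card_add_le_mul (hp : p.Prime) {S A : Finset (ZMod p)}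
    (hS : S.Nonempty) (hA : A.Nonempty) (hSp : 2 * #S ≤ p) {r : ℝ}
    (hr : (#(S + A) : ℝ) ≤ r * #S) {n : ℕ} (hrn : r ^ n < 2) :
    (#(n • A) : ℝ) ≤ (r ^ n - 1) * #S + 1 := by
  obtain ⟨C, hCS, hC, hCn⟩ := exists_subset_card_add_nsmul_le_pow_mul hS hr
  have hCp : 2 * #C ≤ p := (Nat.mul_le_mul_left 2 (card_le_card hCS)).trans hSp
  have hnA := card_le_of_card_add_le_mul hp hC hA.nsmul hCp hrn (hCn n)
  have hC0 : (0 : ℝ) < #C := by exact_mod_cast hC.card_pos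
  have hCS' : (#C : ℝ) ≤ #S := by exact_mod_cast card_le_card hCS
  have hnA1 : (1 : ℝ) ≤ #(n • A) := by exact_mod_cast hA.nsmul.card_pos
  have hrn1 : 0 ≤ r ^ n - 1 := by nlinarith
  nlinarith

end ZMod

theorem iterSum_eq_nsmul {p : ℕ} (A : Finset (ZMod p)) (n : ℕ) : iterSum A n = n • A := by
  induction n with
  | zero => rw [iterSum, zero_nsmul, singleton_zero]
  | succ n ih => rw [iterSum, ih, succ_nsmul]

theorem iterated_sumset_bound_general (p : ℕ) (hp : p.Prime)
    (ε : ℝ) (hε : ε ≤ 10 ^ (-(4 : ℤ)))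
    (S : Finset (ZMod p)) (h0S : (0 : ZMod p) ∈ S)
    (m : ℕ) (hm6 : 6 ≤ m) (hmε : (m : ℝ) ≤ ε * S.card)
    (hsep : (S + S).card + m + 3 ≤ p)
    (A : Finset (ZMod p)) (h0A : (0 : ZMod p) ∈ A)
    (hSA : (S + A).card ≤ S.card + A.card + m) (hAcard : A.card ≤ 3 * m + 5) :
    ∀ k : ℕ, 1 ≤ k → k ≤ 32 →
      ((iterSum A k).card : ℝ) ≤ k * ((A.card : ℝ) + m) * (1 + 5 * k * ε / 2) + 1 := by
  intro k _ hk
  have hS : S.Nonempty := ⟨0, h0S⟩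
  have hS0 : (0 : ℝ) < #S := by exact_mod_cast hS.card_pos
  set t : ℝ := (#A + m) / #S with ht_def
  have ht0 : 0 ≤ t := by positivity
  have htS : t * #S = #A + m := div_mul_cancel₀ _ hS0.ne'
  have htε : t ≤ 29 / 6 * ε := by
    have : (#A : ℝ) ≤ 3 * m + 5 := by exact_mod_cast hAcard
    have : (6 : ℝ) ≤ m := by exact_mod_cast hm6
    rw [ht_def, div_le_iff₀ hS0]
    nlinarith
  have hpow := one_add_pow_le_of_le_mul ht0 htε hε hk
  -- `5 = 29/6 * 30/29`
  have hδ : t * (1 + t) ^ k ≤ 5 * ε := by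
    nlinarith [mul_le_mul htε hpow (by positivity) (by linarith)]
  have hSA' : (#(S + A) : ℝ) ≤ (1 + t) * #S := by
    have : (#(S + A) : ℝ) ≤ #S + #A + m := by exact_mod_cast hSA
    linarith
  have hSp : 2 * #S ≤ p := by
    have := ZMod.card_add_card_le_card_add_add_one hp hS hS (by omega)
    omega
  rw [iterSum_eq_nsmul]
  calc (#(k • A) : ℝ) ≤ ((1 + t) ^ k - 1) * #S + 1 :=
        ZMod.card_nsmul_le_of_card_add_le_mul hp hS ⟨0, h0A⟩ hSp hSA' (by linarith)
    _ ≤ k * t * (1 + k * (5 * ε) / 2) * #S + 1 := by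
        gcongr; exact one_add_pow_sub_one_le ht0 hδ
    _ = k * (#A + m) * (1 + 5 * k * ε / 2) + 1 := by rw [← htS]; ring

theorem iterated_sumset_bound (p : ℕ) (hp : p.Prime) (hp0 : 2 ^ 94 < p)
    (ε : ℝ) (hε : ε ≤ 10 ^ (-(4 : ℤ)))
    (S : Finset (ZMod p)) (h0S : (0 : ZMod p) ∈ S) (hSsize : (p : ℝ) / 35 ≤ S.card)
    (m : ℕ) (hm6 : 6 ≤ m) (hmε : (m : ℝ) ≤ ε * S.card)
    (h2S : (S + S).card ≤ 2 * S.card + m) (hsep : (S + S).card + m + 3 ≤ p)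
    (A : Finset (ZMod p)) (hA : IsKAtom p (m + 3) S A) (h0A : (0 : ZMod p) ∈ A)
    (hSA : (S + A).card ≤ S.card + A.card + m) (hAcard : A.card ≤ 3 * m + 5) :
    ∀ k : ℕ, 1 ≤ k → k ≤ 32 →
      ((iterSum A k).card : ℝ) ≤ k * ((A.card : ℝ) + m) * (1 + 5 * k * ε / 2) + 1 :=
  iterated_sumset_bound_general p hp ε hε S h0S m hm6 hmε hsep A h0A hSA hAcard
end

section
/- Let p be prime and C ⊆ ℤ/pℤ with 0 ∈ C, C ⊆ [0, c) where c = ℓ(C) < p/2 (identifying residues with integers in [0,p)). Let t be a positive integer with t < p/(2c), and define intervals I_i = [(i-1)c, ic) for i = 1, ..., 2t, with I = I₁ ∪ ... ∪ I_{2t}. Let B ⊆ ℤ/pℤ be such that I_i ∩ B ≠ ∅ for every i = 1, ..., 2t. Then |B+C| ≥ |B ∪ ((B+C) ∩ I)| ≥ |B| + (t - 1/2)·c·(ρ(C) - |B ∩ I|/((2t-1)c)), where ρ(C) = (|C|-1)/ℓ(C). -/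
open Finset Pointwise

/-!
Let `b_j` be the largest element of `B` in the block `[j c, (j + 1) c)`. For `j < 2t - 1` the
translate `b_j + C` minus `b_j` consists of `|C| - 1` elements of `(B + C) ∩ I` lying strictly
between `b_j` and `b_j + c`, hence in blocks `j` and `j + 1`. So an element of `(B + C) ∩ I` is
covered by at most two of these translates, and an element of `B` by at most one, because in
block `j` everything above `b_j` misses `B`. Double counting gives
`(2t - 1)(|C| - 1) ≤ |B ∩ I| + 2 |((B + C) ∩ I) \ B|`; adding `|B|` to half of it gives the
bound.
-/

theorem sum_card_le_sum_of_card_filter_le {ι α : Type*} [DecidableEq α] {s : Finset ι}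
    {A : ι → Finset α} {U : Finset α} {w : α → ℕ} (hAU : ∀ i ∈ s, A i ⊆ U)
    (hw : ∀ x ∈ U, #{i ∈ s | x ∈ A i} ≤ w x) :
    ∑ i ∈ s, #(A i) ≤ ∑ x ∈ U, w x :=
  calc ∑ i ∈ s, #(A i) = ∑ i ∈ s, #{x ∈ U | x ∈ A i} :=
        sum_congr rfl fun i hi => by rw [filter_mem_eq_inter, inter_eq_right.2 (hAU i hi)]
    _ = ∑ x ∈ U, #{i ∈ s | x ∈ A i} := by simp only [card_filter]; exact sum_comm
    _ ≤ ∑ x ∈ U, w x := sum_le_sum hw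

namespace ZMod

variable {p : ℕ} {B C : Finset (ZMod p)} {c j : ℕ} {b x : ZMod p}

-- Block `j` is `[j c, (j + 1) c)`, the interval `I_{j+1}` of the statement.
def IsBlockMax (B : Finset (ZMod p)) (c j : ℕ) (b : ZMod p) : Prop :=
  b ∈ B ∧ b.val / c = j ∧ ∀ x ∈ B, x.val / c = j → x.val ≤ b.val

theorem IsBlockMax.val_lt (hb : IsBlockMax B c j b) (hc : 0 < c) : b.val < (j + 1) * c := by
  rw [← hb.2.1, mul_comm]
  exact Nat.lt_mul_div_succ _ hc

theorem exists_isBlockMax {n : ℕ} (hB : ∀ j < n, ∃ x ∈ B, x.val / c = j) :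
    ∃ b : ℕ → ZMod p, ∀ j < n, IsBlockMax B c j (b j) := by
  have : ∀ j, ∃ b, j < n → IsBlockMax B c j b := fun j => by
    by_cases hj : j < n
    · obtain ⟨x, hx, hxj⟩ := hB j hj
      obtain ⟨b, hb, hmax⟩ :=
        exists_max_image {y ∈ B | y.val / c = j} val ⟨x, mem_filter.2 ⟨hx, hxj⟩⟩
      rw [mem_filter] at hb
      exact ⟨b, fun _ => ⟨hb.1, hb.2, fun y hy hyj => hmax y (mem_filter.2 ⟨hy, hyj⟩)⟩⟩
    · exact ⟨0, fun h => absurd h hj⟩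
  choose b hb using this
  exact ⟨b, hb⟩

theorem card_vadd_erase (h0 : 0 ∈ C) (b : ZMod p) : #((b +ᵥ C).erase b) = #C - 1 := by
  have hb : b ∈ b +ᵥ C := by simpa using (vadd_mem_vadd_finset_iff b).2 h0
  rw [card_erase_of_mem hb, card_vadd_finset]

theorem val_lt_of_mem_vadd_erase (hC : ∀ y ∈ C, y.val < c) (hb : b.val + c ≤ p)
    (hx : x ∈ (b +ᵥ C).erase b) : b.val < x.val ∧ x.val < b.val + c := by
  obtain ⟨hxb, y, hy, rfl⟩ : x ≠ b ∧ ∃ y ∈ C, b +ᵥ y = x := by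
    simpa only [mem_erase, mem_vadd_finset] using hx
  have hy0 : 0 < y.val := val_pos.2 fun h => by simp [h] at hxb
  have hyc := hC y hy
  rw [vadd_eq_add, val_add_of_lt (by omega)]
  omega

theorem div_eq_or_of_mem_vadd_erase (hC : ∀ y ∈ C, y.val < c) (hb : IsBlockMax B c j b)
    (hjc : (j + 2) * c ≤ p) (hx : x ∈ (b +ᵥ C).erase b) :
    x.val / c = j + 1 ∨ (x.val / c = j ∧ x ∉ B) := by
  have hc : 0 < c := by
    obtain ⟨-, y, hy, -⟩ : x ≠ b ∧ ∃ y ∈ C, b +ᵥ y = x := by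
      simpa only [mem_erase, mem_vadd_finset] using hx
    exact (Nat.zero_le _).trans_lt (hC y hy)
  have hbj := hb.val_lt hc
  have hjb : j * c ≤ b.val := hb.2.1 ▸ Nat.div_mul_le_self _ _
  obtain ⟨hbx, hxb⟩ := val_lt_of_mem_vadd_erase hC (by nlinarith) hx
  have hlo : j ≤ x.val / c := (Nat.le_div_iff_mul_le hc).2 (by omega)
  have hhi : x.val / c < j + 2 := (Nat.div_lt_iff_lt_mul hc).2 (by nlinarith)
  by_cases hxj : x.val / c = j
  · exact Or.inr ⟨hxj, fun hxB => (hb.2.2 x hxB hxj).not_gt hbx⟩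
  · exact Or.inl (by omega)

theorem card_filter_mem_vadd_erase_le {n : ℕ} {b : ℕ → ZMod p} (hC : ∀ y ∈ C, y.val < c)
    (hnc : (n + 1) * c ≤ p) (hb : ∀ j < n, IsBlockMax B c j (b j)) (x : ZMod p) :
    #{j ∈ range n | x ∈ (b j +ᵥ C).erase (b j)} ≤ if x ∈ B then 1 else 2 := by
  have hdiv : ∀ j ∈ {j ∈ range n | x ∈ (b j +ᵥ C).erase (b j)},
      j = x.val / c - 1 ∨ (j = x.val / c ∧ x ∉ B) := fun j hj => by
    rw [mem_filter, mem_range] at hj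
    have hjc : (j + 2) * c ≤ p := le_trans (Nat.mul_le_mul_right c (by omega)) hnc
    rcases div_eq_or_of_mem_vadd_erase hC (hb j hj.1) hjc hj.2 with h | h
    · exact Or.inl (by omega)
    · exact Or.inr ⟨h.1.symm, h.2⟩
  split_ifs with hxB
  · exact card_le_one_iff.2 fun hj hk => by
      rcases hdiv _ hj with h | h <;> rcases hdiv _ hk with h' | h' <;> simp_all
  · refine (card_le_card (t := {x.val / c - 1, x.val / c}) fun j hj => ?_).trans card_le_two
    rcases hdiv j hj with h | h <;> simp [h]

theorem mul_card_sub_one_le {I : Finset (ZMod p)} {n : ℕ} {b : ℕ → ZMod p} (h0 : 0 ∈ C)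
    (hC : ∀ y ∈ C, y.val < c) (hnc : (n + 1) * c ≤ p)
    (hI : ∀ x : ZMod p, x.val < (n + 1) * c → x ∈ I)
    (hb : ∀ j < n, IsBlockMax B c j (b j)) :
    n * (#C - 1) ≤ #(B ∩ I) + 2 * #(((B + C) ∩ I) \ B) := by
  have hc : 0 < c := (Nat.zero_le _).trans_lt (hC 0 h0)
  have hsub : ∀ j ∈ range n, (b j +ᵥ C).erase (b j) ⊆ (B + C) ∩ I := fun j hj x hx => by
    rw [mem_range] at hj
    have hbj := (hb j hj).val_lt hc
    have hjn : (j + 2) * c ≤ (n + 1) * c := Nat.mul_le_mul_right c (by omega)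
    obtain ⟨-, hxb⟩ := val_lt_of_mem_vadd_erase hC (by nlinarith) hx
    refine mem_inter.2 ⟨?_, hI x (by nlinarith)⟩
    rw [← singleton_add] at hx
    exact add_subset_add_right (singleton_subset_iff.2 (hb j hj).1) (mem_of_mem_erase hx)
  calc n * (#C - 1) = ∑ j ∈ range n, #((b j +ᵥ C).erase (b j)) := by
        simp [card_vadd_erase h0]
    _ ≤ ∑ x ∈ (B + C) ∩ I, if x ∈ B then 1 else 2 :=
        sum_card_le_sum_of_card_filter_le hsub fun x _ =>
          card_filter_mem_vadd_erase_le hC hnc hb x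
    _ = #{x ∈ (B + C) ∩ I | x ∈ B} + 2 * #(((B + C) ∩ I) \ B) := by
        rw [sum_ite, sum_const, sum_const, smul_eq_mul, smul_eq_mul, filter_notMem_eq_sdiff,
          mul_one, mul_comm]
    _ ≤ #(B ∩ I) + 2 * #(((B + C) ∩ I) \ B) := by
        gcongr
        intro x hx
        simp only [mem_filter, mem_inter] at hx ⊢
        exact ⟨hx.2, hx.1.2⟩

end ZMod

theorem half_sub_mul_density_sub_le {t c m k d : ℕ} (ht : 0 < t) (hc : 0 < c) (hm : 0 < m)
    (h : (2 * t - 1) * (m - 1) ≤ k + 2 * d) :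
    ((t : ℝ) - 1 / 2) * c * (((m : ℝ) - 1) / c - (k : ℝ) / ((2 * t - 1) * c)) ≤ d := by
  have h2t : (2 * t - 1 : ℝ) ≠ 0 := by
    have : (1 : ℝ) ≤ t := by exact_mod_cast ht
    linarith
  have hR : (2 * t - 1 : ℝ) * ((m : ℝ) - 1) ≤ k + 2 * d := by
    have := (Nat.cast_le (α := ℝ)).2 h
    push_cast [Nat.cast_sub (by omega : 1 ≤ 2 * t), Nat.cast_sub (by omega : 1 ≤ m)] at this
    exact this
  calc ((t : ℝ) - 1 / 2) * c * (((m : ℝ) - 1) / c - (k : ℝ) / ((2 * t - 1) * c))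
      = ((2 * t - 1 : ℝ) * ((m : ℝ) - 1) - k) / 2 := by
        field_simp
        linear_combination (-(k : ℝ)) * mul_inv_cancel₀ h2t
    _ ≤ d := by linarith

theorem density_lemma_general (p : ℕ)
    (C : Finset (ZMod p)) (h0C : (0 : ZMod p) ∈ C)
    (c : ℕ) (hCc : ∀ x ∈ C, x.val < c)
    (t : ℕ) (ht : 0 < t) (htc : 2 * t * c < p)
    (I : Finset (ZMod p))
    (hI : I = (Finset.range (2 * t * c)).image (fun i : ℕ => (i : ZMod p)))
    (B : Finset (ZMod p))
    (hB : ∀ i : ℕ, 1 ≤ i → i ≤ 2 * t → ∃ b ∈ B, (i - 1) * c ≤ b.val ∧ b.val < i * c) :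
    (B ∪ ((B + C) ∩ I)).card ≤ (B + C).card ∧
    (B.card : ℝ) + ((t : ℝ) - 1 / 2) * c *
        (((C.card : ℝ) - 1) / c - ((B ∩ I).card : ℝ) / ((2 * t - 1) * c))
      ≤ ((B ∪ ((B + C) ∩ I)).card : ℝ) := by
  have : NeZero p := ⟨((Nat.zero_le _).trans_lt htc).ne'⟩
  have hc : 0 < c := by simpa using hCc 0 h0C
  have hn : 2 * t - 1 + 1 = 2 * t := by omega
  obtain ⟨b, hb⟩ := ZMod.exists_isBlockMax (B := B) (c := c) (n := 2 * t - 1) fun j hj => by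
    obtain ⟨x, hx, hlo, hhi⟩ := hB (j + 1) (by omega) (by omega)
    exact ⟨x, hx, Nat.div_eq_of_lt_le (by simpa using hlo) hhi⟩
  have hcount := ZMod.mul_card_sub_one_le h0C hCc (hn ▸ htc.le) (fun x hx =>
    hI ▸ mem_image.2 ⟨x.val, mem_range.2 (hn ▸ hx), ZMod.natCast_zmod_val x⟩) hb
  have hunion : #(B ∪ (B + C) ∩ I) = #B + #(((B + C) ∩ I) \ B) := by
    rw [← union_sdiff_self_eq_union, card_union_of_disjoint disjoint_sdiff]
  refine ⟨card_le_card (union_subset (subset_add_left B h0C) inter_subset_left), ?_⟩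
  rw [hunion, Nat.cast_add]
  exact (add_le_add_iff_left _).2
    (half_sub_mul_density_sub_le ht hc (card_pos.2 ⟨0, h0C⟩) hcount)

theorem density_lemma (p : ℕ) (hp : p.Prime)
    (C : Finset (ZMod p)) (h0C : (0 : ZMod p) ∈ C)
    (c : ℕ) (hc : c = APlen C) (hCc : ∀ x ∈ C, x.val < c) (hcp : 2 * c < p)
    (t : ℕ) (ht : 0 < t) (htc : 2 * t * c < p)
    (I : Finset (ZMod p))
    (hI : I = (Finset.range (2 * t * c)).image (fun i : ℕ => (i : ZMod p)))
    (B : Finset (ZMod p))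
    (hB : ∀ i : ℕ, 1 ≤ i → i ≤ 2 * t → ∃ b ∈ B, (i - 1) * c ≤ b.val ∧ b.val < i * c) :
    (B ∪ ((B + C) ∩ I)).card ≤ (B + C).card ∧
    (B.card : ℝ) + ((t : ℝ) - 1 / 2) * c *
        (((C.card : ℝ) - 1) / c - ((B ∩ I).card : ℝ) / ((2 * t - 1) * c))
      ≤ ((B ∪ ((B + C) ∩ I)).card : ℝ) :=
  density_lemma_general p C h0C c hCc t ht htc I hI B hB
end
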